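/- Theorem 4(3), population form: for every index j < k (identified with the corresponding index of M), (M⁻¹)_{jj} ≤ ρ⁻¹·(M_RE⁻¹)_{jj}. Hence for homoscedastic residual variance σ², total sample size N and trial size n = ρN, the combined-data asymptotic variance σ²·N⁻¹·(M⁻¹)_{jj} of each working-model coefficient (in particular of the treatment coefficient, giving the ATE estimator τ̂) is at most the RE-only asymptotic variance σ²·n⁻¹·(M_RE⁻¹)_{jj} of τ̂_RE. -/

import Mathlib

/-!
For positive definite `B`, `(B⁻¹)ⱼⱼ = maxᵤ (2uⱼ - uᵀBu)`, attained at `u = B⁻¹eⱼ`; for any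
invertible `M`, `x = M⁻¹eⱼ` gives `2xⱼ - xᵀMx = (M⁻¹)ⱼⱼ`. Since `V` vanishes on the trial,
restricting `E[p pᵀ]` to `{S = 1}` leaves the single block `ρ M_RE`, so `xᵀMx ≥ ρ uᵀM_RE u`
for `u` the `U`-part of `x`. Comparing the two at `x = M⁻¹eⱼ` yields
`(M⁻¹)ⱼⱼ ≤ ((ρ M_RE)⁻¹)ⱼⱼ = ρ⁻¹ (M_RE⁻¹)ⱼⱼ`.
-/

open MeasureTheory ProbabilityTheory Matrix

namespace Matrix

variable {m n R : Type*} [Fintype m] [Fintype n]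

theorem dotProduct_mulVec_inv_mulVec_single [DecidableEq m] [CommRing R] {A : Matrix m m R}
    (hA : IsUnit A.det) (j : m) :
    (A⁻¹ *ᵥ Pi.single j 1) ⬝ᵥ A *ᵥ (A⁻¹ *ᵥ Pi.single j 1) = A⁻¹ j j := by
  rw [mulVec_mulVec, mul_nonsing_inv _ hA, one_mulVec, dotProduct_single, mul_one,
    mulVec_single_one, col_apply]

theorem PosDef.two_mul_sub_dotProduct_mulVec_le_inv_apply [DecidableEq m] {B : Matrix m m ℝ}
    (hB : B.PosDef) (u : m → ℝ) (j : m) : 2 * u j - u ⬝ᵥ B *ᵥ u ≤ B⁻¹ j j := by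
  have hdet : IsUnit B.det := (isUnit_iff_isUnit_det B).mp hB.isUnit
  set c := B⁻¹ *ᵥ Pi.single j 1
  have hBc : B *ᵥ c = Pi.single j 1 := by
    rw [mulVec_mulVec, mul_nonsing_inv _ hdet, one_mulVec]
  have hcBu : c ⬝ᵥ B *ᵥ u = u j := by
    rw [dotProduct_mulVec, ← mulVec_transpose, ← conjTranspose_eq_transpose_of_trivial,
      hB.isHermitian.eq, hBc, single_dotProduct, one_mul]
  have hcj : c j = B⁻¹ j j := by simp [c]
  have hsq := hB.posSemidef.dotProduct_mulVec_nonneg (u - c)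
  simp only [star_trivial, mulVec_sub, sub_dotProduct, dotProduct_sub, hcBu, hBc,
    dotProduct_single, mul_one, Pi.sub_apply, hcj] at hsq
  linarith

theorem dotProduct_fromBlocks_zero_mulVec [CommRing R] (B : Matrix m m R) (x : m ⊕ n → R) :
    x ⬝ᵥ fromBlocks B 0 0 0 *ᵥ x = (x ∘ Sum.inl) ⬝ᵥ B *ᵥ (x ∘ Sum.inl) := by
  simp [fromBlocks_mulVec, dotProduct, Fintype.sum_sum_type]

theorem inv_inl_inl_le_of_dotProduct_mulVec_le [DecidableEq m] [DecidableEq n]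
    {A : Matrix (m ⊕ n) (m ⊕ n) ℝ} {B : Matrix m m ℝ} (hA : IsUnit A.det) (hB : B.PosDef)
    (hBA : ∀ x, (x ∘ Sum.inl) ⬝ᵥ B *ᵥ (x ∘ Sum.inl) ≤ x ⬝ᵥ A *ᵥ x) (j : m) :
    A⁻¹ (Sum.inl j) (Sum.inl j) ≤ B⁻¹ j j := by
  set x := A⁻¹ *ᵥ Pi.single (Sum.inl j) 1
  have hxj : (x ∘ Sum.inl) j = A⁻¹ (Sum.inl j) (Sum.inl j) := by simp [x]
  have hxAx := dotProduct_mulVec_inv_mulVec_single hA (Sum.inl j)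
  have hvar := hB.two_mul_sub_dotProduct_mulVec_le_inv_apply (x ∘ Sum.inl) j
  linarith [hBA x]

end Matrix

section SecondMoment

variable {Ω ι : Type*} [MeasurableSpace Ω]

noncomputable def secondMoment (μ : Measure Ω) (f : Ω → ι → ℝ) : Matrix ι ι ℝ :=
  Matrix.of fun i j => ∫ ω, f ω i * f ω j ∂μ

theorem dotProduct_secondMoment_mulVec [Fintype ι] {μ : Measure Ω} {f : Ω → ι → ℝ}
    (hf : ∀ i, MemLp (fun ω => f ω i) 2 μ) (x : ι → ℝ) :
    x ⬝ᵥ secondMoment μ f *ᵥ x = ∫ ω, (∑ i, x i * f ω i) ^ 2 ∂μ := by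
  have hint : ∀ i j, Integrable (fun ω => x i * x j * (f ω i * f ω j)) μ := fun i j =>
    ((hf i).integrable_mul (hf j)).const_mul _
  have hsq : ∀ ω, (∑ i, x i * f ω i) ^ 2 = ∑ i, ∑ j, x i * x j * (f ω i * f ω j) := by
    intro ω
    rw [sq, Finset.sum_mul_sum]
    exact Finset.sum_congr rfl fun i _ => Finset.sum_congr rfl fun j _ => by ring
  simp_rw [hsq]
  rw [integral_finsetSum _ fun i _ => integrable_finsetSum _ fun j _ => hint i j]
  simp_rw [integral_finsetSum _ fun j _ => hint _ j, integral_const_mul]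
  simp only [secondMoment, dotProduct, mulVec, of_apply, Finset.mul_sum]
  exact Finset.sum_congr rfl fun i _ => Finset.sum_congr rfl fun j _ => by ring

theorem dotProduct_secondMoment_restrict_le [Fintype ι] {μ : Measure Ω} {f : Ω → ι → ℝ}
    (hf : ∀ i, MemLp (fun ω => f ω i) 2 μ) (s : Set Ω) (x : ι → ℝ) :
    x ⬝ᵥ secondMoment (μ.restrict s) f *ᵥ x ≤ x ⬝ᵥ secondMoment μ f *ᵥ x := by
  rw [dotProduct_secondMoment_mulVec hf,
    dotProduct_secondMoment_mulVec fun i => (hf i).restrict s]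
  refine setIntegral_le_integral (MemLp.integrable_sq ?_) (ae_of_all _ fun ω => sq_nonneg _)
  exact memLp_finsetSum Finset.univ fun i _ => (hf i).const_mul (x i)

theorem secondMoment_cond (μ : Measure Ω) (s : Set Ω) (f : Ω → ι → ℝ) :
    secondMoment μ[|s] f = (μ s).toReal⁻¹ • secondMoment (μ.restrict s) f := by
  ext i j
  simp [secondMoment, ProbabilityTheory.cond, integral_smul_measure]

theorem secondMoment_sumElim_of_ae_eq_zero {κ : Type*} {μ : Measure Ω} (U : Ω → ι → ℝ)
    {V : Ω → κ → ℝ} (hV : ∀ᵐ ω ∂μ, V ω = 0) :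
    secondMoment μ (fun ω => Sum.elim (U ω) (V ω)) = fromBlocks (secondMoment μ U) 0 0 0 := by
  ext (i | i) (j | j) <;> simp only [secondMoment, of_apply, fromBlocks_apply₁₁,
    fromBlocks_apply₁₂, fromBlocks_apply₂₁, fromBlocks_apply₂₂, Sum.elim_inl, Sum.elim_inr,
    Matrix.zero_apply]
  all_goals exact integral_eq_zero_of_ae (hV.mono fun ω h => by simp [h])

end SecondMoment

theorem combined_data_asymptotic_variance_dominated_general
    {Ω : Type*} [MeasurableSpace Ω] (P : Measure Ω)
    {k l : ℕ}
    (S : Ω → ℝ) (hS : Measurable S)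
    (ρ : ℝ) (hρ : ρ = (P {ω | S ω = 1}).toReal) (hρ0 : 0 < ρ)
    (U : Ω → Fin k → ℝ)
    (V : Ω → Fin l → ℝ)
    (hUL2 : ∀ i, MemLp (fun ω => U ω i) 2 P)
    (hVL2 : ∀ i, MemLp (fun ω => V ω i) 2 P)
    -- the external-control bias basis vanishes on the trial
    (hVS : ∀ᵐ ω ∂P, S ω = 1 → V ω = 0)
    (M : Matrix (Fin k ⊕ Fin l) (Fin k ⊕ Fin l) ℝ)
    (hM : M = Matrix.of fun i j =>
      ∫ ω, Sum.elim (U ω) (V ω) i * Sum.elim (U ω) (V ω) j ∂P)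
    (hMpd : M.PosDef)
    (MRE : Matrix (Fin k) (Fin k) ℝ)
    (hMRE : MRE = Matrix.of fun i j =>
      ∫ ω, U ω i * U ω j ∂(P[|{ω | S ω = 1}]))
    (hMREpd : MRE.PosDef) :
    ∀ j : Fin k,
      M⁻¹ (Sum.inl j) (Sum.inl j) ≤ ρ⁻¹ * MRE⁻¹ j j ∧
      ∀ σ2 N : ℝ, 0 ≤ σ2 → 0 < N →
        σ2 / N * M⁻¹ (Sum.inl j) (Sum.inl j) ≤ σ2 / (ρ * N) * MRE⁻¹ j j := by
  set T := {ω | S ω = 1}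
  have hρMRE : ρ • MRE = secondMoment (P.restrict T) U := by
    rw [hMRE, ← secondMoment, secondMoment_cond, smul_smul, ← hρ, mul_inv_cancel₀ hρ0.ne',
      one_smul]
  have hV0 : ∀ᵐ ω ∂P.restrict T, V ω = 0 :=
    (ae_restrict_iff' (hS (measurableSet_singleton 1))).mpr hVS
  have hdom : ∀ x, (x ∘ Sum.inl) ⬝ᵥ (ρ • MRE) *ᵥ (x ∘ Sum.inl) ≤ x ⬝ᵥ M *ᵥ x := fun x => by
    rw [hρMRE, ← dotProduct_fromBlocks_zero_mulVec (n := Fin l),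
      ← secondMoment_sumElim_of_ae_eq_zero U hV0, hM, ← secondMoment]
    exact dotProduct_secondMoment_restrict_le (by rintro (i | i) <;> simp [hUL2, hVL2]) T x
  intro j
  have : Invertible ρ := invertibleOfNonzero hρ0.ne'
  have key := inv_inl_inl_le_of_dotProduct_mulVec_le
    ((isUnit_iff_isUnit_det M).mp hMpd.isUnit) (hMREpd.smul hρ0) hdom j
  rw [inv_smul _ _ ((isUnit_iff_isUnit_det _).mp hMREpd.isUnit), invOf_eq_inv,
    Matrix.smul_apply, smul_eq_mul] at key
  refine ⟨key, fun σ2 N hσ2 hN => ?_⟩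
  calc σ2 / N * M⁻¹ (Sum.inl j) (Sum.inl j) ≤ σ2 / N * (ρ⁻¹ * MRE⁻¹ j j) := by gcongr
    _ = σ2 / (ρ * N) * MRE⁻¹ j j := by ring

/-- Theorem 4(3), population form: with `M = E[p pᵀ]` the
combined-data Gram matrix of `p = (Uᵀ, Vᵀ)ᵀ` (working-model regressors `U` and
external-control bias basis `V`, the latter vanishing on the trial `S = 1`),
`M_RE = E[U Uᵀ | S = 1]` the trial Gram matrix, and `ρ = P(S=1)`, every
working-model coefficient satisfies `(M⁻¹)_{jj} ≤ ρ⁻¹ (M_RE⁻¹)_{jj}`; hence for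
homoscedastic residual variance `σ²`, total sample size `N` and trial size
`n = ρN`, the combined-data asymptotic variance `σ² N⁻¹ (M⁻¹)_{jj}` is at most
the RE-only asymptotic variance `σ² (ρN)⁻¹ (M_RE⁻¹)_{jj}`. -/
theorem combined_data_asymptotic_variance_dominated
    {Ω : Type*} [MeasurableSpace Ω] (P : Measure Ω) [IsProbabilityMeasure P]
    {k l : ℕ}
    (S : Ω → ℝ) (hS : Measurable S) (hS01 : ∀ ω, S ω = 0 ∨ S ω = 1)
    (ρ : ℝ) (hρ : ρ = (P {ω | S ω = 1}).toReal) (hρ0 : 0 < ρ) (hρ1 : ρ < 1)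
    (U : Ω → Fin k → ℝ) (hU : Measurable U)
    (V : Ω → Fin l → ℝ) (hV : Measurable V)
    (hUL2 : ∀ i, MemLp (fun ω => U ω i) 2 P)
    (hVL2 : ∀ i, MemLp (fun ω => V ω i) 2 P)
    -- the external-control bias basis vanishes on the trial
    (hVS : ∀ᵐ ω ∂P, S ω = 1 → V ω = 0)
    (M : Matrix (Fin k ⊕ Fin l) (Fin k ⊕ Fin l) ℝ)
    (hM : M = Matrix.of fun i j =>
      ∫ ω, Sum.elim (U ω) (V ω) i * Sum.elim (U ω) (V ω) j ∂P)
    (hMpd : M.PosDef)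
    (MRE : Matrix (Fin k) (Fin k) ℝ)
    (hMRE : MRE = Matrix.of fun i j =>
      ∫ ω, U ω i * U ω j ∂(P[|{ω | S ω = 1}]))
    (hMREpd : MRE.PosDef) :
    ∀ j : Fin k,
      M⁻¹ (Sum.inl j) (Sum.inl j) ≤ ρ⁻¹ * MRE⁻¹ j j ∧
      ∀ σ2 N : ℝ, 0 ≤ σ2 → 0 < N →
        σ2 / N * M⁻¹ (Sum.inl j) (Sum.inl j) ≤ σ2 / (ρ * N) * MRE⁻¹ j j :=
  combined_data_asymptotic_variance_dominated_general P S hS ρ hρ hρ0 U V hUL2 hVL2 hVS M hM hMpd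
    MRE hMRE hMREpd
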